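/- For every context-free grammar G = (N, T, P, S) in Chomsky normal form whose language does not contain the empty word, there exist a context-free grammar G' = (N', T, P', S) in Dyck normal form with L(G') = L(G) and a map h_d : N' ∪ T → N ∪ T with h_d(t) = t for every terminal t, h_d(S) = S, and h_d(X) ∈ N for every X ∈ N', such that for all sentential forms α, δ over N' ∪ T, if α derives δ in G' (in zero or more rewriting steps), then the string obtained by applying h_d letterwise to α derives the string obtained by applying h_d letterwise to δ in G. -/

import Mathlib

/-- A context-free grammar is in Chomsky normal form: every rule is of the form `X → AB`
with `A`, `B` nonterminals, or `X → a` with `a` a terminal. -/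
def IsChomskyNF {T : Type} (g : ContextFreeGrammar T) : Prop :=
  ∀ r ∈ g.rules,
    (∃ A B : g.NT, r.output = [Symbol.nonterminal A, Symbol.nonterminal B]) ∨
    (∃ a : T, r.output = [Symbol.terminal a])

/-- A context-free grammar is in Dyck normal form:
(1) it is in Chomsky normal form;
(2) if `A → a` is a rule with `A ≠ S`, then no other rule rewrites `A`;
(3) if `X → AB` and `X' → B'A` are both rules, they are the same rule
    (i.e. no *other* rule has `A` on the opposite side);
(4) if `X → AB` and `X' → A'B` are rules then `A = A'`, and if `X → AB` and `X' → AB'`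
    are rules then `B = B'`. -/
def IsDyckNF {T : Type} (g : ContextFreeGrammar T) : Prop :=
  IsChomskyNF g ∧
  (∀ r ∈ g.rules, ∀ a : T, r.output = [Symbol.terminal a] → r.input ≠ g.initial →
    ∀ r' ∈ g.rules, r'.input = r.input → r' = r) ∧
  (∀ r ∈ g.rules, ∀ r' ∈ g.rules, ∀ A B B' : g.NT,
    r.output = [Symbol.nonterminal A, Symbol.nonterminal B] →
    r'.output = [Symbol.nonterminal B', Symbol.nonterminal A] → r = r') ∧
  (∀ r ∈ g.rules, ∀ r' ∈ g.rules, ∀ A A' B B' : g.NT,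
    r.output = [Symbol.nonterminal A, Symbol.nonterminal B] →
    r'.output = [Symbol.nonterminal A', Symbol.nonterminal B'] →
    (B = B' → A = A') ∧ (A = A' → B = B'))

/-- Letterwise extension of a map on nonterminals to symbols, fixing every terminal. -/
def mapSymbol {T N N' : Type} (f : N → N') : Symbol T N → Symbol T N'
  | .terminal t => .terminal t
  | .nonterminal X => .nonterminal (f X)

/-!
Make every nonterminal occurrence of a derivation tree of `G` remember the rules used at itself
and at its sibling: a new nonterminal `some (σ, τ, b)` is the left (`b = false`) or right
(`b = true`) child of a binary node whose children are rewritten by `σ` and `τ`, and it is only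
allowed to rewrite by `cond b τ σ`. A child thus determines its sibling and its side, which gives
conditions (3) and (4) of Dyck normal form, and a child committed to a terminal rule has no other
rule, which gives (2). Forgetting the decoration sends rules to rules, hence derivations to
derivations; conversely every derivation tree of `G` can be decorated from the leaves up.
-/

namespace ContextFreeRule

variable {T N N' : Type}

def map (f : N → N') (r : ContextFreeRule T N) : ContextFreeRule T N' :=
  ⟨f r.input, r.output.map (mapSymbol f)⟩

lemma Rewrites.map {r : ContextFreeRule T N} {u v : List (Symbol T N)} (f : N → N')
    (h : r.Rewrites u v) : (r.map f).Rewrites (u.map (mapSymbol f)) (v.map (mapSymbol f)) := by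
  induction h with
  | head s => simpa [ContextFreeRule.map, mapSymbol] using Rewrites.head (r := r.map f) _
  | cons x _ ih => exact ih.cons _

lemma Rewrites.append_cases {r : ContextFreeRule T N} {x y z : List (Symbol T N)}
    (h : r.Rewrites (x ++ y) z) :
    (∃ x', r.Rewrites x x' ∧ z = x' ++ y) ∨ (∃ y', r.Rewrites y y' ∧ z = x ++ y') := by
  induction x generalizing z with
  | nil => exact .inr ⟨z, h, rfl⟩
  | cons s x ih =>
    cases h with
    | head => exact .inl ⟨_, .head x, by simp⟩
    | cons _ h =>
      rcases ih h with ⟨x', hx, rfl⟩ | ⟨y', hy, rfl⟩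
      · exact .inl ⟨s :: x', hx.cons s, rfl⟩
      · exact .inr ⟨y', hy, rfl⟩

lemma Rewrites.eq_output_of_singleton {r : ContextFreeRule T N} {A : N}
    {v : List (Symbol T N)} (h : r.Rewrites [.nonterminal A] v) : r.input = A ∧ v = r.output := by
  cases h with
  | head => simp
  | cons _ h => cases h

end ContextFreeRule

namespace ContextFreeGrammar

variable {T : Type} {g : ContextFreeGrammar T}

lemma Derives.map {g' : ContextFreeGrammar T} (f : g'.NT → g.NT)
    (hf : ∀ r ∈ g'.rules, r.map f ∈ g.rules) {u v : List (Symbol T g'.NT)}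
    (h : g'.Derives u v) : g.Derives (u.map (mapSymbol f)) (v.map (mapSymbol f)) := by
  induction h with
  | refl => rfl
  | tail _ hp ih =>
    obtain ⟨r, hr, hrw⟩ := hp
    exact ih.trans_produces ⟨_, hf r hr, hrw.map f⟩

lemma Produces.append_cases {x y z : List (Symbol T g.NT)} (h : g.Produces (x ++ y) z) :
    (∃ x', g.Produces x x' ∧ z = x' ++ y) ∨ (∃ y', g.Produces y y' ∧ z = x ++ y') := by
  obtain ⟨r, hr, hrw⟩ := h
  rcases hrw.append_cases with ⟨x', hx, rfl⟩ | ⟨y', hy, rfl⟩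
  · exact .inl ⟨x', ⟨r, hr, hx⟩, rfl⟩
  · exact .inr ⟨y', ⟨r, hr, hy⟩, rfl⟩

lemma Derives.append_split {x y z : List (Symbol T g.NT)} (h : g.Derives (x ++ y) z) :
    ∃ x' y', z = x' ++ y' ∧ g.Derives x x' ∧ g.Derives y y' := by
  generalize hw : x ++ y = w at h
  induction h using Relation.ReflTransGen.head_induction_on generalizing x y with
  | refl => exact ⟨x, y, hw.symm, .refl x, .refl y⟩
  | head hp _ ih =>
    subst hw
    rcases hp.append_cases with ⟨x', hx, rfl⟩ | ⟨y', hy, rfl⟩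
    · obtain ⟨x'', y'', rfl, h₁, h₂⟩ := ih rfl
      exact ⟨x'', y'', rfl, hx.trans_derives h₁, h₂⟩
    · obtain ⟨x'', y'', rfl, h₁, h₂⟩ := ih rfl
      exact ⟨x'', y'', rfl, h₁, hy.trans_derives h₂⟩

lemma Derives.append {x x' y y' : List (Symbol T g.NT)} (hx : g.Derives x x')
    (hy : g.Derives y y') : g.Derives (x ++ y) (x' ++ y') :=
  (hx.append_right y).trans (hy.append_left x')

lemma Derives.eq_of_map_terminal {w : List T} {z : List (Symbol T g.NT)}
    (h : g.Derives (w.map .terminal) z) : z = w.map .terminal := by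
  rcases h.eq_or_head with rfl | ⟨_, hp, _⟩
  · rfl
  · obtain ⟨r, -, hr⟩ := hp.exists_nonterminal_input_mem
    simp at hr

lemma Derives.exists_head_rule {A : g.NT} {w : List T}
    (h : g.Derives [.nonterminal A] (w.map .terminal)) :
    ∃ r ∈ g.rules, r.input = A ∧ g.Derives r.output (w.map .terminal) := by
  rcases h.eq_or_head with h | ⟨v, ⟨r, hr, hrw⟩, hv⟩
  · have : Symbol.nonterminal A ∈ w.map Symbol.terminal := h ▸ List.mem_singleton_self _
    simp at this
  · obtain ⟨rfl, rfl⟩ := hrw.eq_output_of_singleton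
    exact ⟨r, hr, rfl, hv⟩

lemma Derives.ne_nil (hg : ∀ r ∈ g.rules, r.output ≠ []) {u v : List (Symbol T g.NT)}
    (h : g.Derives u v) (hu : u ≠ []) : v ≠ [] := by
  induction h with
  | refl => exact hu
  | tail _ hp _ =>
    obtain ⟨r, hr, hrw⟩ := hp
    obtain ⟨p, q, -, rfl⟩ := hrw.exists_parts
    simp [hg r hr]

end ContextFreeGrammar

lemma IsChomskyNF.output_ne_nil {T : Type} {g : ContextFreeGrammar T} (hg : IsChomskyNF g) :
    ∀ r ∈ g.rules, r.output ≠ [] := by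
  intro r hr
  rcases hg r hr with ⟨A, B, h⟩ | ⟨a, h⟩ <;> simp [h]

namespace DyckNF

open ContextFreeGrammar Classical

variable {T : Type} (G : ContextFreeGrammar T)

abbrev NT : Type := Option (ContextFreeRule T G.NT × ContextFreeRule T G.NT × Bool)

def proj : NT G → G.NT
  | none => G.initial
  | some (σ, τ, b) => (cond b τ σ).input

def Commits : NT G → ContextFreeRule T G.NT → Prop
  | none, ρ => ρ ∈ G.rules ∧ ρ.input = G.initial
  | some (σ, τ, b), ρ => σ ∈ G.rules ∧ τ ∈ G.rules ∧ ρ = cond b τ σ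

def childPair (σ τ : ContextFreeRule T G.NT) : List (Symbol T (NT G)) :=
  [.nonterminal (some (σ, τ, false)), .nonterminal (some (σ, τ, true))]

noncomputable def liftOutputs (ρ : ContextFreeRule T G.NT) : Finset (List (Symbol T (NT G))) :=
  match ρ.output with
  | [.terminal a] => {[.terminal a]}
  | [.nonterminal D, .nonterminal E] =>
      ((G.rules.filter (·.input = D)) ×ˢ (G.rules.filter (·.input = E))).image
        fun p => childPair G p.1 p.2
  | _ => ∅

noncomputable def commitments : Finset (NT G × ContextFreeRule T G.NT) :=
  (G.rules.filter (·.input = G.initial)).image (fun ρ => (none, ρ)) ∪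
    (G.rules ×ˢ G.rules ×ˢ Finset.univ).image fun p => (some p, cond p.2.2 p.2.1 p.1)

noncomputable def rules : Finset (ContextFreeRule T (NT G)) :=
  (commitments G).biUnion fun p => (liftOutputs G p.2).image fun out => ⟨p.1, out⟩

noncomputable abbrev grammar : ContextFreeGrammar T :=
  ⟨NT G, none, rules G⟩

variable {G}

lemma mem_commitments {X : NT G} {ρ : ContextFreeRule T G.NT} :
    (X, ρ) ∈ commitments G ↔ Commits G X ρ := by
  rcases X with _ | ⟨σ, τ, b⟩
  · simp [commitments, Commits]
  · simp [commitments, Commits, and_assoc, @eq_comm _ _ ρ]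

lemma mem_liftOutputs {ρ : ContextFreeRule T G.NT} {out : List (Symbol T (NT G))} :
    out ∈ liftOutputs G ρ ↔
      (∃ a, ρ.output = [.terminal a] ∧ out = [.terminal a]) ∨
      ∃ σ ∈ G.rules, ∃ τ ∈ G.rules,
        ρ.output = [.nonterminal σ.input, .nonterminal τ.input] ∧ out = childPair G σ τ := by
  unfold liftOutputs
  split
  next a h => simp [h]
  next D E h =>
    simp only [h, Finset.mem_image, Finset.mem_product, Finset.mem_filter, Prod.exists]
    aesop
  next h₁ h₂ =>
    simp only [Finset.notMem_empty, false_iff, not_or, not_exists, not_and]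
    exact ⟨fun a ha => absurd ha (h₁ a), fun σ _ τ _ h => absurd h (h₂ _ _)⟩

lemma mem_rules {r : ContextFreeRule T (NT G)} :
    r ∈ rules G ↔ ∃ ρ, Commits G r.input ρ ∧ r.output ∈ liftOutputs G ρ := by
  simp only [rules, Finset.mem_biUnion, Finset.mem_image, Prod.exists, mem_commitments]
  constructor
  · rintro ⟨X, ρ, hc, out, hout, rfl⟩
    exact ⟨ρ, hc, hout⟩
  · rintro ⟨ρ, hc, hout⟩
    exact ⟨r.input, ρ, hc, r.output, hout, rfl⟩

lemma Commits.mem {X : NT G} {ρ : ContextFreeRule T G.NT} (h : Commits G X ρ) :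
    ρ ∈ G.rules := by
  rcases X with _ | ⟨σ, τ, _ | _⟩
  exacts [h.1, h.2.2 ▸ h.1, h.2.2 ▸ h.2.1]

lemma Commits.input_eq {X : NT G} {ρ : ContextFreeRule T G.NT} (h : Commits G X ρ) :
    ρ.input = proj G X := by
  rcases X with _ | ⟨σ, τ, b⟩
  exacts [h.2, h.2.2 ▸ rfl]

lemma Commits.unique {p} {ρ ρ' : ContextFreeRule T G.NT} (h : Commits G (some p) ρ)
    (h' : Commits G (some p) ρ') : ρ = ρ' :=
  h.2.2.trans h'.2.2.symm

lemma map_proj_of_mem_liftOutputs {ρ : ContextFreeRule T G.NT} {out : List (Symbol T (NT G))}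
    (h : out ∈ liftOutputs G ρ) : out.map (mapSymbol (proj G)) = ρ.output := by
  rcases mem_liftOutputs.mp h with ⟨a, hρ, rfl⟩ | ⟨σ, -, τ, -, hρ, rfl⟩
  · simp [hρ, mapSymbol]
  · simp [hρ, childPair, mapSymbol, proj]

lemma eq_of_terminal_mem_liftOutputs {ρ : ContextFreeRule T G.NT} {a : T}
    {out : List (Symbol T (NT G))} (ha : [.terminal a] ∈ liftOutputs G ρ)
    (h : out ∈ liftOutputs G ρ) : out = [.terminal a] := by
  have hρ := map_proj_of_mem_liftOutputs ha
  rcases mem_liftOutputs.mp h with ⟨a', hρ', rfl⟩ | ⟨σ, -, τ, -, hρ', -⟩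
  · simp_all [mapSymbol]
  · simp_all [mapSymbol]

lemma map_proj_mem {r : ContextFreeRule T (NT G)} (h : r ∈ rules G) :
    r.map (proj G) ∈ G.rules := by
  obtain ⟨ρ, hc, hout⟩ := mem_rules.mp h
  convert hc.mem using 1
  exact ContextFreeRule.ext hc.input_eq.symm (map_proj_of_mem_liftOutputs hout)

lemma exists_siblings_of_mem_rules {r : ContextFreeRule T (NT G)} (h : r ∈ rules G) {A B : NT G}
    (hr : r.output = [.nonterminal A, .nonterminal B]) :
    ∃ σ τ, A = some (σ, τ, false) ∧ B = some (σ, τ, true) := by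
  obtain ⟨ρ, -, hout⟩ := mem_rules.mp h
  rcases mem_liftOutputs.mp hout with ⟨a, -, h'⟩ | ⟨σ, -, τ, -, -, h'⟩
  · simp [hr] at h'
  · simp only [hr, childPair, List.cons.injEq, Symbol.nonterminal.injEq] at h'
    exact ⟨σ, τ, h'.1, h'.2.1⟩

theorem isDyckNF_grammar : IsDyckNF (grammar G) := by
  refine ⟨fun r hr => ?_, fun r hr a hra hne r' hr' hin => ?_,
    fun r hr r' hr' A B B' ho ho' => ?_, fun r hr r' hr' A A' B B' ho ho' => ?_⟩
  · obtain ⟨ρ, -, hout⟩ := mem_rules.mp hr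
    rcases mem_liftOutputs.mp hout with ⟨a, -, h⟩ | ⟨σ, -, τ, -, -, h⟩
    exacts [.inr ⟨a, h⟩, .inl ⟨_, _, h⟩]
  · obtain ⟨p, hp⟩ := Option.ne_none_iff_exists'.mp hne
    obtain ⟨ρ, hc, hout⟩ := mem_rules.mp hr
    obtain ⟨ρ', hc', hout'⟩ := mem_rules.mp hr'
    rw [hin, hp] at hc'
    rw [hp] at hc
    rw [← hc.unique hc'] at hout'
    rw [hra] at hout
    exact ContextFreeRule.ext hin (eq_of_terminal_mem_liftOutputs hout hout' |>.trans hra.symm)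
  · obtain ⟨σ, τ, rfl, -⟩ := exists_siblings_of_mem_rules hr ho
    obtain ⟨σ', τ', -, h⟩ := exists_siblings_of_mem_rules hr' ho'
    simp at h
  · obtain ⟨σ, τ, rfl, rfl⟩ := exists_siblings_of_mem_rules hr ho
    obtain ⟨σ', τ', rfl, rfl⟩ := exists_siblings_of_mem_rules hr' ho'
    simp

lemma produces_of_commits {X : NT G} {ρ : ContextFreeRule T G.NT} (hX : Commits G X ρ)
    {out : List (Symbol T (NT G))} (hout : out ∈ liftOutputs G ρ) :
    (grammar G).Produces [.nonterminal X] out :=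
  ⟨⟨X, out⟩, mem_rules.mpr ⟨ρ, hX, hout⟩, ContextFreeRule.Rewrites.input_output⟩

lemma exists_commits_derives (hG : IsChomskyNF G) {A : G.NT} {w : List T}
    (h : G.Derives [.nonterminal A] (w.map .terminal)) :
    ∃ ρ ∈ G.rules, ρ.input = A ∧
      ∀ X, Commits G X ρ → (grammar G).Derives [.nonterminal X] (w.map .terminal) := by
  induction hn : w.length using Nat.strong_induction_on generalizing A w with
  | _ n ih =>
  obtain ⟨ρ, hρ, rfl, hder⟩ := h.exists_head_rule
  refine ⟨ρ, hρ, rfl, fun X hX => ?_⟩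
  rcases hG ρ hρ with ⟨D, E, hρo⟩ | ⟨a, hρo⟩
  · obtain ⟨x, y, hxy, hD, hE⟩ :=
      (show G.Derives ([.nonterminal D] ++ [.nonterminal E]) _ from hρo ▸ hder).append_split
    obtain ⟨u, v, rfl, rfl, rfl⟩ := List.map_eq_append_iff.mp hxy
    have hu : u ≠ [] := by simpa using hD.ne_nil hG.output_ne_nil (by simp)
    have hv : v ≠ [] := by simpa using hE.ne_nil hG.output_ne_nil (by simp)
    simp only [List.length_append] at hn
    obtain ⟨σ, hσ, rfl, hσX⟩ := ih u.length (by grind [List.length_pos_iff]) hD rfl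
    obtain ⟨τ, hτ, rfl, hτX⟩ := ih v.length (by grind [List.length_pos_iff]) hE rfl
    have hpair : childPair G σ τ ∈ liftOutputs G ρ :=
      mem_liftOutputs.mpr (.inr ⟨σ, hσ, τ, hτ, hρo, rfl⟩)
    have hleft := hσX (some (σ, τ, false)) ⟨hσ, hτ, rfl⟩
    have hright := hτX (some (σ, τ, true)) ⟨hσ, hτ, rfl⟩
    simpa using (produces_of_commits hX hpair).trans_derives (hleft.append hright)
  · obtain rfl : w = [a] := List.map_injective_iff.mpr (fun _ _ => Symbol.terminal.inj)
      ((hρo ▸ hder).eq_of_map_terminal (w := [a]))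
    exact (produces_of_commits hX (mem_liftOutputs.mpr (.inl ⟨a, hρo, rfl⟩))).single

theorem language_grammar (hG : IsChomskyNF G) : (grammar G).language = G.language := by
  ext w
  simp only [mem_language_iff]
  constructor
  · intro h
    simpa [List.map_map, Function.comp_def, mapSymbol, proj] using
      h.map (proj G) fun _ => map_proj_mem
  · intro h
    obtain ⟨ρ, hρ, hin, hlift⟩ := exists_commits_derives hG h
    exact hlift none ⟨hρ, hin⟩

end DyckNF

theorem exists_dyckNF_strong_general {T : Type} (G : ContextFreeGrammar T)
    (hCNF : IsChomskyNF G) :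
    ∃ (G' : ContextFreeGrammar T) (hd : G'.NT → G.NT),
      IsDyckNF G' ∧ G'.language = G.language ∧ hd G'.initial = G.initial ∧
      ∀ α δ : List (Symbol T G'.NT), G'.Derives α δ →
        G.Derives (α.map (mapSymbol hd)) (δ.map (mapSymbol hd)) :=
  ⟨DyckNF.grammar G, DyckNF.proj G, DyckNF.isDyckNF_grammar, DyckNF.language_grammar hCNF, rfl,
    fun _ _ h => h.map (DyckNF.proj G) fun _ => DyckNF.map_proj_mem⟩

/-- For every grammar `G` in Chomsky normal form whose language does not
contain the empty word, there exist a grammar `G'` in Dyck normal form with the same language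
and a map `h_d` on nonterminals (extended letterwise to symbols, fixing terminals, and sending
the start symbol of `G'` to the start symbol of `G`) such that any derivation `α ⇒* δ` of `G'`
is mapped to a derivation in `G`. -/
theorem exists_dyckNF_strong {T : Type} (G : ContextFreeGrammar T)
    (hCNF : IsChomskyNF G) (hG : [] ∉ G.language) :
    ∃ (G' : ContextFreeGrammar T) (hd : G'.NT → G.NT),
      IsDyckNF G' ∧ G'.language = G.language ∧ hd G'.initial = G.initial ∧
      ∀ α δ : List (Symbol T G'.NT), G'.Derives α δ →
        G.Derives (α.map (mapSymbol hd)) (δ.map (mapSymbol hd)) :=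
  exists_dyckNF_strong_general G hCNF
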